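/- Let r > λ ≥ 0, σ > 0, H ∈ (1/2,1), β ∈ (0,1−H), and let ϑ = (1/(2σ²))·((r−λ)/(H+β))^(2(H+β))·(1/(1−(H+β)))^(2−2(H+β)). For the fBm process (A(τ))_{τ∈ℕ} with Gaussian marginals Z(τ) ~ N(0,σ²τ^(2H)), and any b > 0: P[sup_{τ≥0}(A(τ) − rτ) > b] ≤ Γ(1/(2β)) / (2β ϑ^(1/(2β))) · b^(−(1−(H+β))/β). -/

import Mathlib

open Real Set MeasureTheory ProbabilityTheory
open scoped NNReal

/-
The event is the union over `τ ≥ 1` of `{Z τ > b + (r - λ) τ}` (at `τ = 0` it is empty). The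
Gaussian Chernoff bound gives each of these probability at most
`exp (-(b + (r - λ) τ)² / (2 σ² τ^(2H)))`, and weighted AM-GM with weights `H + β` and
`1 - (H + β)` gives `(b + (r - λ) τ)² ≥ 2 σ² ϑ b^(2(1 - H - β)) τ^(2(H + β))`, so the exponent is
at least `a τ^(2β)` with `a = ϑ b^(2(1 - H - β))`. This bound decreases in `τ`, so the union
bound is dominated by `∫₀^∞ exp (-a t^(2β)) dt = a^(-1/(2β)) Γ(1 + 1/(2β))`.
-/

lemma measure_lt_le_exp_of_map_eq_gaussianReal {Ω : Type*} [MeasurableSpace Ω] {μ : Measure Ω}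
    [IsProbabilityMeasure μ] {X : Ω → ℝ} {v : ℝ≥0} (hX : μ.map X = gaussianReal 0 v)
    {x : ℝ} (hx : 0 ≤ x) :
    μ {ω | x < X ω} ≤ ENNReal.ofReal (exp (-x ^ 2 / (2 * v))) := by
  have hint : Integrable (fun ω ↦ exp (x / v * X ω)) μ :=
    mgf_pos_iff.mp (by rw [mgf_gaussianReal hX]; positivity)
  have chernoff := measure_ge_le_exp_mul_mgf x (by positivity) hint
  rw [mgf_gaussianReal hX, ← exp_add] at chernoff
  -- Chernoff at the optimal `t = x / v`; for `v = 0` both sides of the exponent identity vanish.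
  have hexponent : -(x / v) * x + (0 * (x / v) + v * (x / v) ^ 2 / 2) = -x ^ 2 / (2 * v) := by
    rcases eq_or_ne (v : ℝ) 0 with hv | hv
    · simp [hv]
    · field_simp; ring
  calc μ {ω | x < X ω} ≤ μ {ω | x ≤ X ω} :=
        measure_mono (ofPred_subset_ofPred.mpr fun _ ↦ le_of_lt)
    _ = ENNReal.ofReal (μ.real {ω | x ≤ X ω}) := (ofReal_measureReal).symm
    _ ≤ ENNReal.ofReal (exp (-x ^ 2 / (2 * v))) :=
      ENNReal.ofReal_le_ofReal (hexponent ▸ chernoff)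

lemma rpow_mul_rpow_le_sq_add_mul {s b c t : ℝ} (hs₀ : 0 < s) (hs₁ : s < 1) (hb : 0 ≤ b)
    (hc : 0 ≤ c) (ht : 0 ≤ t) :
    (c / s) ^ (2 * s) * (1 / (1 - s)) ^ (2 - 2 * s) * b ^ (2 * (1 - s)) * t ^ (2 * s) ≤
      (b + c * t) ^ 2 := by
  have h1s : 0 < 1 - s := by linarith
  have amgm : (c / s * t) ^ s * (1 / (1 - s) * b) ^ (1 - s) ≤ b + c * t :=
    (geom_mean_le_arith_mean2_weighted hs₀.le h1s.le (by positivity) (by positivity)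
      (by ring)).trans_eq (by field_simp; ring)
  calc (c / s) ^ (2 * s) * (1 / (1 - s)) ^ (2 - 2 * s) * b ^ (2 * (1 - s)) * t ^ (2 * s)
      = ((c / s * t) ^ s * (1 / (1 - s) * b) ^ (1 - s)) ^ 2 := by
        rw [mul_pow, ← rpow_mul_natCast (by positivity), ← rpow_mul_natCast (by positivity),
          mul_rpow (by positivity) ht, mul_rpow (by positivity) hb]
        push_cast
        ring_nf
    _ ≤ (b + c * t) ^ 2 := by gcongr

/-- The exponent `ϑ` of the envelope, with `c = r - λ` and `s = H + β`. -/
noncomputable def envelopeRate (σ c s : ℝ) : ℝ :=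
  1 / (2 * σ ^ 2) * (c / s) ^ (2 * s) * (1 / (1 - s)) ^ (2 - 2 * s)

lemma envelopeRate_pos {σ c s : ℝ} (hσ : σ ≠ 0) (hc : 0 < c) (hs₀ : 0 < s) (hs₁ : s < 1) :
    0 < envelopeRate σ c s := by
  have : 0 < 1 - s := by linarith
  unfold envelopeRate
  positivity

lemma envelopeRate_mul_le {σ c H β b t : ℝ} (hσ : σ ≠ 0) (hs₀ : 0 < H + β) (hs₁ : H + β < 1)
    (hb : 0 ≤ b) (hc : 0 ≤ c) (ht : 0 < t) :
    envelopeRate σ c (H + β) * b ^ (2 * (1 - (H + β))) * t ^ (2 * β) ≤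
      (b + c * t) ^ 2 / (2 * (σ ^ 2 * t ^ (2 * H))) := by
  have htH : t ^ (2 * β) * t ^ (2 * H) = t ^ (2 * (H + β)) := by
    rw [← rpow_add ht]; ring_nf
  rw [le_div_iff₀ (by positivity), envelopeRate]
  calc 1 / (2 * σ ^ 2) * (c / (H + β)) ^ (2 * (H + β)) *
        (1 / (1 - (H + β))) ^ (2 - 2 * (H + β)) * b ^ (2 * (1 - (H + β))) * t ^ (2 * β) *
        (2 * (σ ^ 2 * t ^ (2 * H)))
      = (c / (H + β)) ^ (2 * (H + β)) * (1 / (1 - (H + β))) ^ (2 - 2 * (H + β)) *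
        b ^ (2 * (1 - (H + β))) * t ^ (2 * (H + β)) := by
        rw [← htH]; field_simp
    _ ≤ (b + c * t) ^ 2 := rpow_mul_rpow_le_sq_add_mul hs₀ hs₁ hb hc ht.le

lemma integral_exp_neg_mul_rpow_two_mul {ϑ b q β : ℝ} (hϑ : 0 < ϑ) (hb : 0 < b) (hβ : 0 < β) :
    ∫ t in Ioi (0 : ℝ), exp (-(ϑ * b ^ (2 * q)) * t ^ (2 * β)) =
      Gamma (1 / (2 * β)) / (2 * β * ϑ ^ (1 / (2 * β))) * b ^ (-q / β) := by
  rw [integral_exp_neg_mul_rpow (by positivity) (by positivity),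
    Gamma_add_one (by positivity), mul_rpow hϑ.le (by positivity), ← rpow_mul hb.le,
    show -1 / (2 * β) = -(1 / (2 * β)) by ring, rpow_neg hϑ.le]
  field_simp

theorem AntitoneOn.tsum_ofReal_add_one_le_integral {f : ℝ → ℝ} (anti : AntitoneOn f (Ici 0))
    (integrable : IntegrableOn f (Ioi 0)) (nonneg : ∀ t ∈ Ioi 0, 0 ≤ f t) :
    ∑' n : ℕ, ENNReal.ofReal (f (n + 1 : ℕ)) ≤ ENNReal.ofReal (∫ t in Ioi 0, f t) := by
  rw [← ENNReal.ofReal_tsum_of_nonneg (fun n ↦ nonneg _ (mem_Ioi.mpr (by positivity)))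
    ((summable_nat_add_iff 1).mpr (anti.summable_of_integrableOn_Ioi_zero integrable nonneg))]
  exact ENNReal.ofReal_le_ofReal (anti.tsum_add_one_le_integral integrable nonneg)

lemma antitoneOn_exp_neg_mul_rpow {a p : ℝ} (ha : 0 ≤ a) (hp : 0 ≤ p) :
    AntitoneOn (fun t : ℝ ↦ exp (-a * t ^ p)) (Ici 0) := fun x hx y _ hxy ↦ by
  simp only [neg_mul, exp_le_exp, neg_le_neg_iff]
  exact mul_le_mul_of_nonneg_left (rpow_le_rpow hx hxy hp) ha

lemma integrableOn_exp_neg_mul_rpow {a p : ℝ} (ha : 0 < a) (hp : 0 < p) :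
    IntegrableOn (fun t : ℝ ↦ exp (-a * t ^ p)) (Ioi 0) := by
  simpa using integrableOn_rpow_mul_exp_neg_mul_rpow neg_one_lt_zero hp ha

lemma measure_add_mul_lt_le_exp_envelopeRate {Ω : Type*} [MeasurableSpace Ω] {μ : Measure Ω}
    [IsProbabilityMeasure μ] {X : Ω → ℝ} {σ c H β b t : ℝ}
    (hX : μ.map X = gaussianReal 0 (σ ^ 2 * t ^ (2 * H)).toNNReal) (hσ : σ ≠ 0)
    (hs₀ : 0 < H + β) (hs₁ : H + β < 1) (hb : 0 ≤ b) (hc : 0 ≤ c) (ht : 0 < t) :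
    μ {ω | b + c * t < X ω} ≤
      ENNReal.ofReal
        (exp (-(envelopeRate σ c (H + β) * b ^ (2 * (1 - (H + β)))) * t ^ (2 * β))) := by
  refine (measure_lt_le_exp_of_map_eq_gaussianReal hX (by positivity)).trans
    (ENNReal.ofReal_le_ofReal (exp_le_exp.mpr ?_))
  rw [coe_toNNReal _ (by positivity), neg_mul, neg_div]
  exact neg_le_neg (envelopeRate_mul_le hσ hs₀ hs₁ hb hc ht)

theorem fbm_affine_envelope_general {Ω : Type*} [MeasurableSpace Ω] (μ : Measure Ω)
    [IsProbabilityMeasure μ] (A Z : ℕ → Ω → ℝ) (lam σ r H β b : ℝ)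
    (hσ : 0 < σ) (hr : lam < r) (hH : H ∈ Set.Ioo (1/2 : ℝ) 1)
    (hβ : β ∈ Set.Ioo (0:ℝ) (1 - H)) (hb : 0 < b)
    (hA0 : ∀ ω, A 0 ω = 0)
    (hA : ∀ τ : ℕ, ∀ ω, A τ ω = lam * τ + Z τ ω)
    (hZ : ∀ τ : ℕ, 1 ≤ τ →
      Measure.map (Z τ) μ = gaussianReal 0 (Real.toNNReal (σ ^ 2 * (τ : ℝ) ^ (2 * H)))) :
    let ϑ := (1 / (2 * σ ^ 2)) * ((r - lam) / (H + β)) ^ (2 * (H + β)) *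
      (1 / (1 - (H + β))) ^ (2 - 2 * (H + β))
    μ {ω | ∃ τ : ℕ, A τ ω - r * τ > b} ≤
      ENNReal.ofReal (Real.Gamma (1 / (2 * β)) / (2 * β * ϑ ^ (1 / (2 * β))) *
        b ^ (-(1 - (H + β)) / β)) := by
  intro ϑ
  obtain ⟨hH, -⟩ := hH
  obtain ⟨hβ₀, hβ₁⟩ := hβ
  have hs₀ : 0 < H + β := by linarith
  have hs₁ : H + β < 1 := by linarith
  have hc : 0 < r - lam := sub_pos.mpr hr
  have hϑ : 0 < ϑ := envelopeRate_pos hσ.ne' hc hs₀ hs₁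
  set a := ϑ * b ^ (2 * (1 - (H + β)))
  have hE₀ : μ {ω | A 0 ω - r * ((0 : ℕ) : ℝ) > b} = 0 := by
    simp [hA0, hb.not_gt]
  have hE : ∀ n : ℕ, μ {ω | A (n + 1) ω - r * ((n + 1 : ℕ) : ℝ) > b} ≤
      ENNReal.ofReal (exp (-a * ((n + 1 : ℕ) : ℝ) ^ (2 * β))) := fun n ↦ by
    have hevent : {ω | A (n + 1) ω - r * ((n + 1 : ℕ) : ℝ) > b} =
        {ω | b + (r - lam) * ((n + 1 : ℕ) : ℝ) < Z (n + 1) ω} := by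
      ext ω
      simp only [mem_ofPred_eq, hA]
      constructor <;> intro h <;> linarith
    rw [hevent]
    exact measure_add_mul_lt_le_exp_envelopeRate (hZ _ (Nat.le_add_left 1 n)) hσ.ne' hs₀ hs₁
      hb.le hc.le (by positivity)
  calc μ {ω | ∃ τ : ℕ, A τ ω - r * τ > b}
      ≤ ∑' τ : ℕ, μ {ω | A τ ω - r * τ > b} := by
        rw [ofPred_exists]; exact measure_iUnion_le _
    _ = ∑' n : ℕ, μ {ω | A (n + 1) ω - r * ((n + 1 : ℕ) : ℝ) > b} := by
        rw [tsum_eq_zero_add' ENNReal.summable, hE₀, zero_add]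
    _ ≤ ∑' n : ℕ, ENNReal.ofReal (exp (-a * ((n + 1 : ℕ) : ℝ) ^ (2 * β))) :=
        ENNReal.tsum_le_tsum hE
    _ ≤ ENNReal.ofReal (∫ t in Ioi 0, exp (-a * t ^ (2 * β))) :=
        AntitoneOn.tsum_ofReal_add_one_le_integral
          (antitoneOn_exp_neg_mul_rpow (by positivity) (by positivity))
          (integrableOn_exp_neg_mul_rpow (by positivity) (by positivity)) fun _ _ ↦ (exp_pos _).le
    _ = _ := congrArg ENNReal.ofReal (integral_exp_neg_mul_rpow_two_mul hϑ hb hβ₀)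

theorem fbm_affine_envelope {Ω : Type*} [MeasurableSpace Ω] (μ : Measure Ω)
    [IsProbabilityMeasure μ] (A Z : ℕ → Ω → ℝ) (lam σ r H β b : ℝ)
    (hlam : 0 ≤ lam) (hσ : 0 < σ) (hr : lam < r) (hH : H ∈ Set.Ioo (1/2 : ℝ) 1)
    (hβ : β ∈ Set.Ioo (0:ℝ) (1 - H)) (hb : 0 < b)
    (hA0 : ∀ ω, A 0 ω = 0)
    (hA : ∀ τ : ℕ, ∀ ω, A τ ω = lam * τ + Z τ ω)
    (hZ : ∀ τ : ℕ, 1 ≤ τ →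
      Measure.map (Z τ) μ = gaussianReal 0 (Real.toNNReal (σ ^ 2 * (τ : ℝ) ^ (2 * H)))) :
    let ϑ := (1 / (2 * σ ^ 2)) * ((r - lam) / (H + β)) ^ (2 * (H + β)) *
      (1 / (1 - (H + β))) ^ (2 - 2 * (H + β))
    μ {ω | ∃ τ : ℕ, A τ ω - r * τ > b} ≤
      ENNReal.ofReal (Real.Gamma (1 / (2 * β)) / (2 * β * ϑ ^ (1 / (2 * β))) *
        b ^ (-(1 - (H + β)) / β)) :=
  fbm_affine_envelope_general μ A Z lam σ r H β b hσ hr hH hβ hb hA0 hA hZ
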